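/- arXiv:2304.07271 — 6 statements merged into one kernel-verified Lean document; each statement's English description precedes it below -/
import Mathlib

section
/- Let α, β, τ_R, a be nonzero reals, set c = -4τ_Rα/(5(α²+4β²)), b = -a, λ = 2τ_R²α(8α²+25β²)/(25(α²+4β²)²), ε = -44a²τ_R²α²β/(25(α²+4β²)²), γ = -8a²τ_R²α(4α²+5β²)/(25(α²+4β²)²), δ = a⁴τ_R²α²(α²+32β²)/(25β(α²+4β²)²). Suppose ρ : ℝ → ℝ is twice differentiable and satisfies ρ' = c(a-ρ)²(b-ρ). Then ρ satisfies ρ'' + ((αε-2βγ)/(τ_Rβ) - 4ατ_R/(α²+4β²)·ρ²)·ρ' + (δ/β - α²(αε-2βγ)²/(16τ_R²β⁴))·ρ + (2αγ+4βε)/(α²+4β²)·ρ³ + (2λ/α - 4τ_R²β²/(α²+4β²)²)·ρ⁵ = 0. -/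
/-! With `D = α² + 4β²` and `c = -4τα/(5D)`, the parameter choices collapse the coefficients of
the second-order equation to `-c(a² - 5ρ²)`, `2a⁴c²`, `-4a²c²` and `2c²`, so it reads
`ρ'' + c(5ρ² - a²)ρ' + 2c²ρ(ρ² - a²)² = 0`. For the autonomous equation `ρ' = f(ρ)` with
`f(x) = -c(a - x)²(a + x)` one has `ρ'' = f'(ρ) f(ρ)`, and `f' + c(5x² - a²) = 2cx(a + x)`,
so `(f' + c(5x² - a²)) f = -2c²x(x² - a²)²` identically. -/

theorem deriv_deriv_of_deriv_eq_comp {𝕜 : Type*} [NontriviallyNormedField 𝕜] {f ρ : 𝕜 → 𝕜}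
    {x : 𝕜} (hρ : DifferentiableAt 𝕜 ρ x) (hf : DifferentiableAt 𝕜 f (ρ x))
    (hode : deriv ρ = f ∘ ρ) :
    deriv (deriv ρ) x = deriv f (ρ x) * f (ρ x) := by
  have hρ' : HasDerivAt ρ (f (ρ x)) x := by
    simpa [hode] using hρ.hasDerivAt
  rw [hode]
  exact (hf.hasDerivAt.comp x hρ').deriv

theorem deriv_deriv_add_of_deriv_eq_cubic (c a : ℝ) {ρ : ℝ → ℝ} (hρ : Differentiable ℝ ρ)
    (hode : ∀ ξ, deriv ρ ξ = c * (a - ρ ξ) ^ 2 * (-a - ρ ξ)) (ξ : ℝ) :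
    deriv (deriv ρ) ξ + c * (5 * ρ ξ ^ 2 - a ^ 2) * deriv ρ ξ
      + 2 * c ^ 2 * ρ ξ * (ρ ξ ^ 2 - a ^ 2) ^ 2 = 0 := by
  set f : ℝ → ℝ := fun x => c * (a - x) ^ 2 * (-a - x)
  have hf : HasDerivAt f (c * (a - ρ ξ) * (a + 3 * ρ ξ)) (ρ ξ) := by
    have hsub (b : ℝ) := (hasDerivAt_id' (ρ ξ)).const_sub b
    exact ((((hsub a).fun_pow 2).const_mul c).mul (hsub (-a))).congr_deriv (by ring)
  have hdd : deriv (deriv ρ) ξ = deriv f (ρ ξ) * f (ρ ξ) :=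
    deriv_deriv_of_deriv_eq_comp (hρ ξ) hf.differentiableAt (funext hode)
  rw [hdd, hf.deriv, hode ξ]
  ring

section Coefficients

variable {α β τ a c : ℝ}

theorem four_mul_div_eq_neg_five_mul (hα : α ≠ 0)
    (hc : c = -(4 * τ * α) / (5 * (α ^ 2 + 4 * β ^ 2))) :
    4 * α * τ / (α ^ 2 + 4 * β ^ 2) = -5 * c := by
  subst hc
  field_simp

theorem mul_eps_sub_mul_gam_eq {eps gam : ℝ} (hα : α ≠ 0)
    (hc : c = -(4 * τ * α) / (5 * (α ^ 2 + 4 * β ^ 2)))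
    (heps : eps = -(44 * a ^ 2 * τ ^ 2 * α ^ 2 * β) / (25 * (α ^ 2 + 4 * β ^ 2) ^ 2))
    (hgam : gam = -(8 * a ^ 2 * τ ^ 2 * α * (4 * α ^ 2 + 5 * β ^ 2)) / (25 * (α ^ 2 + 4 * β ^ 2) ^ 2)) :
    α * eps - 2 * β * gam = -(a ^ 2 * c * τ * β) := by
  subst hc heps hgam
  field_simp
  ring

theorem div_sub_mul_sq_div_eq {del : ℝ} (hβ : β ≠ 0) (hτ : τ ≠ 0)
    (hc : c = -(4 * τ * α) / (5 * (α ^ 2 + 4 * β ^ 2)))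
    (hdel : del = a ^ 4 * τ ^ 2 * α ^ 2 * (α ^ 2 + 32 * β ^ 2) / (25 * β * (α ^ 2 + 4 * β ^ 2) ^ 2)) :
    del / β - α ^ 2 * (-(a ^ 2 * c * τ * β)) ^ 2 / (16 * τ ^ 2 * β ^ 4) = 2 * a ^ 4 * c ^ 2 := by
  subst hc hdel
  field_simp
  ring

theorem mul_gam_add_mul_eps_div_eq {eps gam : ℝ} (hα : α ≠ 0)
    (hc : c = -(4 * τ * α) / (5 * (α ^ 2 + 4 * β ^ 2)))
    (heps : eps = -(44 * a ^ 2 * τ ^ 2 * α ^ 2 * β) / (25 * (α ^ 2 + 4 * β ^ 2) ^ 2))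
    (hgam : gam = -(8 * a ^ 2 * τ ^ 2 * α * (4 * α ^ 2 + 5 * β ^ 2)) / (25 * (α ^ 2 + 4 * β ^ 2) ^ 2)) :
    (2 * α * gam + 4 * β * eps) / (α ^ 2 + 4 * β ^ 2) = -4 * a ^ 2 * c ^ 2 := by
  subst hc heps hgam
  field_simp
  ring

theorem two_mul_lam_div_sub_eq {lam : ℝ} (hα : α ≠ 0)
    (hc : c = -(4 * τ * α) / (5 * (α ^ 2 + 4 * β ^ 2)))
    (hlam : lam = 2 * τ ^ 2 * α * (8 * α ^ 2 + 25 * β ^ 2) / (25 * (α ^ 2 + 4 * β ^ 2) ^ 2)) :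
    2 * lam / α - 4 * τ ^ 2 * β ^ 2 / (α ^ 2 + 4 * β ^ 2) ^ 2 = 2 * c ^ 2 := by
  subst hc hlam
  field_simp
  ring

end Coefficients

theorem stmt_7_general (α β τ a c b lam eps gam del : ℝ)
    (hα : α ≠ 0) (hβ : β ≠ 0) (hτ : τ ≠ 0)
    (hc : c = -(4 * τ * α) / (5 * (α ^ 2 + 4 * β ^ 2)))
    (hb : b = -a)
    (hlam : lam = 2 * τ ^ 2 * α * (8 * α ^ 2 + 25 * β ^ 2) / (25 * (α ^ 2 + 4 * β ^ 2) ^ 2))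
    (heps : eps = -(44 * a ^ 2 * τ ^ 2 * α ^ 2 * β) / (25 * (α ^ 2 + 4 * β ^ 2) ^ 2))
    (hgam : gam = -(8 * a ^ 2 * τ ^ 2 * α * (4 * α ^ 2 + 5 * β ^ 2)) / (25 * (α ^ 2 + 4 * β ^ 2) ^ 2))
    (hdel : del = a ^ 4 * τ ^ 2 * α ^ 2 * (α ^ 2 + 32 * β ^ 2) / (25 * β * (α ^ 2 + 4 * β ^ 2) ^ 2))
    (ρ : ℝ → ℝ) (h1 : Differentiable ℝ ρ)
    (hode : ∀ ξ, deriv ρ ξ = c * (a - ρ ξ) ^ 2 * (b - ρ ξ)) :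
    ∀ ξ, deriv (deriv ρ) ξ
      + ((α * eps - 2 * β * gam) / (τ * β) - 4 * α * τ / (α ^ 2 + 4 * β ^ 2) * (ρ ξ) ^ 2) * deriv ρ ξ
      + (del / β - α ^ 2 * (α * eps - 2 * β * gam) ^ 2 / (16 * τ ^ 2 * β ^ 4)) * ρ ξ
      + (2 * α * gam + 4 * β * eps) / (α ^ 2 + 4 * β ^ 2) * (ρ ξ) ^ 3
      + (2 * lam / α - 4 * τ ^ 2 * β ^ 2 / (α ^ 2 + 4 * β ^ 2) ^ 2) * (ρ ξ) ^ 5 = 0 := by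
  subst hb
  intro ξ
  have hcross := mul_eps_sub_mul_gam_eq hα hc heps hgam
  have hconst : (α * eps - 2 * β * gam) / (τ * β) = -(a ^ 2 * c) := by
    rw [hcross]
    field_simp
  rw [hconst, hcross, four_mul_div_eq_neg_five_mul hα hc, div_sub_mul_sq_div_eq hβ hτ hc hdel,
    mul_gam_add_mul_eps_div_eq hα hc heps hgam, two_mul_lam_div_sub_eq hα hc hlam]
  linear_combination deriv_deriv_add_of_deriv_eq_cubic c a h1 hode ξ

theorem stmt_7 (α β τ a c b lam eps gam del : ℝ)
    (hα : α ≠ 0) (hβ : β ≠ 0) (hτ : τ ≠ 0) (ha : a ≠ 0)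
    (hc : c = -(4 * τ * α) / (5 * (α ^ 2 + 4 * β ^ 2)))
    (hb : b = -a)
    (hlam : lam = 2 * τ ^ 2 * α * (8 * α ^ 2 + 25 * β ^ 2) / (25 * (α ^ 2 + 4 * β ^ 2) ^ 2))
    (heps : eps = -(44 * a ^ 2 * τ ^ 2 * α ^ 2 * β) / (25 * (α ^ 2 + 4 * β ^ 2) ^ 2))
    (hgam : gam = -(8 * a ^ 2 * τ ^ 2 * α * (4 * α ^ 2 + 5 * β ^ 2)) / (25 * (α ^ 2 + 4 * β ^ 2) ^ 2))
    (hdel : del = a ^ 4 * τ ^ 2 * α ^ 2 * (α ^ 2 + 32 * β ^ 2) / (25 * β * (α ^ 2 + 4 * β ^ 2) ^ 2))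
    (ρ : ℝ → ℝ) (h1 : Differentiable ℝ ρ) (h2 : Differentiable ℝ (deriv ρ))
    (hode : ∀ ξ, deriv ρ ξ = c * (a - ρ ξ) ^ 2 * (b - ρ ξ)) :
    ∀ ξ, deriv (deriv ρ) ξ
      + ((α * eps - 2 * β * gam) / (τ * β) - 4 * α * τ / (α ^ 2 + 4 * β ^ 2) * (ρ ξ) ^ 2) * deriv ρ ξ
      + (del / β - α ^ 2 * (α * eps - 2 * β * gam) ^ 2 / (16 * τ ^ 2 * β ^ 4)) * ρ ξ
      + (2 * α * gam + 4 * β * eps) / (α ^ 2 + 4 * β ^ 2) * (ρ ξ) ^ 3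
      + (2 * lam / α - 4 * τ ^ 2 * β ^ 2 / (α ^ 2 + 4 * β ^ 2) ^ 2) * (ρ ξ) ^ 5 = 0 :=
  stmt_7_general α β τ a c b lam eps gam del hα hβ hτ hc hb hlam heps hgam hdel ρ h1 hode
end

section
/- Let α, β, τ_R, a be nonzero reals, set c = -4τ_Rα/(5(α²+4β²)), b = 0, λ = 2τ_R²α(8α²+25β²)/(25(α²+4β²)²), ε = -124a²τ_R²α²β/(25(α²+4β²)²), γ = 8a²τ_R²α(15β²-4α²)/(25(α²+4β²)²), δ = a⁴τ_R²α²(9α²+32β²)/(25β(α²+4β²)²). Suppose ρ : ℝ → ℝ is twice differentiable and satisfies ρ' = c(a-ρ)²(-ρ). Then ρ satisfies ρ'' + ((αε-2βγ)/(τ_Rβ) - 4ατ_R/(α²+4β²)·ρ²)·ρ' + (δ/β - α²(αε-2βγ)²/(16τ_R²β⁴))·ρ + (2αγ+4βε)/(α²+4β²)·ρ³ + (2λ/α - 4τ_R²β²/(α²+4β²)²)·ρ⁵ = 0. -/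
/-!
Along a solution of the autonomous first-order equation `ρ' = f(ρ)` one has `ρ'' = f'(ρ) ρ'`,
so a second-order equation `ρ'' + P(ρ) ρ' + Q(ρ) = 0` holds for every such solution as soon as
the polynomial identity `(f' + P) f + Q = 0` holds. For `f(r) = -c r (a - r)²` and the parameter
choices of the statement this identity is checked by clearing denominators.
-/

lemma hasDerivAt_deriv_of_deriv_eq_comp {ρ f : ℝ → ℝ} {f' ξ : ℝ}
    (hode : ∀ x, deriv ρ x = f (ρ x)) (hf : HasDerivAt f f' (ρ ξ)) (hρ : DifferentiableAt ℝ ρ ξ) :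
    HasDerivAt (deriv ρ) (f' * deriv ρ ξ) ξ := by
  have hcomp : f ∘ ρ = deriv ρ := funext fun x => (hode x).symm
  simpa only [hcomp] using hf.comp ξ hρ.hasDerivAt

lemma deriv_deriv_add_eq_zero_of_deriv_eq_comp {ρ f f' P Q : ℝ → ℝ} (hρ : Differentiable ℝ ρ)
    (hode : ∀ x, deriv ρ x = f (ρ x)) (hf : ∀ r, HasDerivAt f (f' r) r)
    (hcompat : ∀ r, (f' r + P r) * f r + Q r = 0) (ξ : ℝ) :
    deriv (deriv ρ) ξ + P (ρ ξ) * deriv ρ ξ + Q (ρ ξ) = 0 := by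
  rw [(hasDerivAt_deriv_of_deriv_eq_comp hode (hf (ρ ξ)) (hρ ξ)).deriv, hode]
  linear_combination hcompat (ρ ξ)

lemma hasDerivAt_mul_sq_sub_mul_neg (c a r : ℝ) :
    HasDerivAt (fun x => c * (a - x) ^ 2 * (-x)) (c * (a - r) * (3 * r - a)) r := by
  refine (((((hasDerivAt_id' r).const_sub a).fun_pow 2).const_mul c).fun_mul
    (hasDerivAt_id' r).fun_neg).congr_deriv ?_
  simp only [Nat.cast_ofNat, Nat.add_one_sub_one, pow_one]
  ring

lemma amplitude_compatibility (α β τ a c lam eps gam del : ℝ) (hα : α ≠ 0) (hβ : β ≠ 0)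
    (hc : c = -(4 * τ * α) / (5 * (α ^ 2 + 4 * β ^ 2)))
    (hlam : lam = 2 * τ ^ 2 * α * (8 * α ^ 2 + 25 * β ^ 2) / (25 * (α ^ 2 + 4 * β ^ 2) ^ 2))
    (heps : eps = -(124 * a ^ 2 * τ ^ 2 * α ^ 2 * β) / (25 * (α ^ 2 + 4 * β ^ 2) ^ 2))
    (hgam : gam = 8 * a ^ 2 * τ ^ 2 * α * (15 * β ^ 2 - 4 * α ^ 2) / (25 * (α ^ 2 + 4 * β ^ 2) ^ 2))
    (hdel : del = a ^ 4 * τ ^ 2 * α ^ 2 * (9 * α ^ 2 + 32 * β ^ 2) / (25 * β * (α ^ 2 + 4 * β ^ 2) ^ 2))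
    (r : ℝ) :
    (c * (a - r) * (3 * r - a)
        + ((α * eps - 2 * β * gam) / (τ * β) - 4 * α * τ / (α ^ 2 + 4 * β ^ 2) * r ^ 2))
        * (c * (a - r) ^ 2 * (-r))
      + ((del / β - α ^ 2 * (α * eps - 2 * β * gam) ^ 2 / (16 * τ ^ 2 * β ^ 4)) * r
        + (2 * α * gam + 4 * β * eps) / (α ^ 2 + 4 * β ^ 2) * r ^ 3
        + (2 * lam / α - 4 * τ ^ 2 * β ^ 2 / (α ^ 2 + 4 * β ^ 2) ^ 2) * r ^ 5) = 0 := by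
  have hden : α ^ 2 + 4 * β ^ 2 ≠ 0 := by positivity
  subst hc hlam heps hgam hdel
  field_simp
  ring

theorem stmt_9_general (α β τ a c lam eps gam del : ℝ)
    (hα : α ≠ 0) (hβ : β ≠ 0)
    (hc : c = -(4 * τ * α) / (5 * (α ^ 2 + 4 * β ^ 2)))
    (hlam : lam = 2 * τ ^ 2 * α * (8 * α ^ 2 + 25 * β ^ 2) / (25 * (α ^ 2 + 4 * β ^ 2) ^ 2))
    (heps : eps = -(124 * a ^ 2 * τ ^ 2 * α ^ 2 * β) / (25 * (α ^ 2 + 4 * β ^ 2) ^ 2))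
    (hgam : gam = 8 * a ^ 2 * τ ^ 2 * α * (15 * β ^ 2 - 4 * α ^ 2) / (25 * (α ^ 2 + 4 * β ^ 2) ^ 2))
    (hdel : del = a ^ 4 * τ ^ 2 * α ^ 2 * (9 * α ^ 2 + 32 * β ^ 2) / (25 * β * (α ^ 2 + 4 * β ^ 2) ^ 2))
    (ρ : ℝ → ℝ) (h1 : Differentiable ℝ ρ)
    (hode : ∀ ξ, deriv ρ ξ = c * (a - ρ ξ) ^ 2 * (-ρ ξ)) :
    ∀ ξ, deriv (deriv ρ) ξ
      + ((α * eps - 2 * β * gam) / (τ * β) - 4 * α * τ / (α ^ 2 + 4 * β ^ 2) * (ρ ξ) ^ 2) * deriv ρ ξ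
      + (del / β - α ^ 2 * (α * eps - 2 * β * gam) ^ 2 / (16 * τ ^ 2 * β ^ 4)) * ρ ξ
      + (2 * α * gam + 4 * β * eps) / (α ^ 2 + 4 * β ^ 2) * (ρ ξ) ^ 3
      + (2 * lam / α - 4 * τ ^ 2 * β ^ 2 / (α ^ 2 + 4 * β ^ 2) ^ 2) * (ρ ξ) ^ 5 = 0 := by
  intro ξ
  have h := deriv_deriv_add_eq_zero_of_deriv_eq_comp h1 hode
    (hasDerivAt_mul_sq_sub_mul_neg c a)
    (amplitude_compatibility α β τ a c lam eps gam del hα hβ hc hlam heps hgam hdel) ξ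
  linear_combination h

theorem stmt_9 (α β τ a c b lam eps gam del : ℝ)
    (hα : α ≠ 0) (hβ : β ≠ 0) (hτ : τ ≠ 0) (ha : a ≠ 0)
    (hc : c = -(4 * τ * α) / (5 * (α ^ 2 + 4 * β ^ 2)))
    (hb : b = 0)
    (hlam : lam = 2 * τ ^ 2 * α * (8 * α ^ 2 + 25 * β ^ 2) / (25 * (α ^ 2 + 4 * β ^ 2) ^ 2))
    (heps : eps = -(124 * a ^ 2 * τ ^ 2 * α ^ 2 * β) / (25 * (α ^ 2 + 4 * β ^ 2) ^ 2))
    (hgam : gam = 8 * a ^ 2 * τ ^ 2 * α * (15 * β ^ 2 - 4 * α ^ 2) / (25 * (α ^ 2 + 4 * β ^ 2) ^ 2))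
    (hdel : del = a ^ 4 * τ ^ 2 * α ^ 2 * (9 * α ^ 2 + 32 * β ^ 2) / (25 * β * (α ^ 2 + 4 * β ^ 2) ^ 2))
    (ρ : ℝ → ℝ) (h1 : Differentiable ℝ ρ) (h2 : Differentiable ℝ (deriv ρ))
    (hode : ∀ ξ, deriv ρ ξ = c * (a - ρ ξ) ^ 2 * (-ρ ξ)) :
    ∀ ξ, deriv (deriv ρ) ξ
      + ((α * eps - 2 * β * gam) / (τ * β) - 4 * α * τ / (α ^ 2 + 4 * β ^ 2) * (ρ ξ) ^ 2) * deriv ρ ξ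
      + (del / β - α ^ 2 * (α * eps - 2 * β * gam) ^ 2 / (16 * τ ^ 2 * β ^ 4)) * ρ ξ
      + (2 * α * gam + 4 * β * eps) / (α ^ 2 + 4 * β ^ 2) * (ρ ξ) ^ 3
      + (2 * lam / α - 4 * τ ^ 2 * β ^ 2 / (α ^ 2 + 4 * β ^ 2) ^ 2) * (ρ ξ) ^ 5 = 0 :=
  stmt_9_general α β τ a c lam eps gam del hα hβ hc hlam heps hgam hdel ρ h1 hode
end

section
/- Let α, β, τ_R, b be nonzero reals, set c = -4τ_Rα/(5(α²+4β²)), a = 0, λ = 2τ_R²α(8α²+25β²)/(25(α²+4β²)²), ε = -32b²τ_R²α²β/(25(α²+4β²)²), γ = -16b²τ_R²α³/(25(α²+4β²)²), δ = 0. Suppose ρ : ℝ → ℝ is twice differentiable and satisfies ρ' = c·ρ²·(b-ρ). Then ρ satisfies ρ'' + ((αε-2βγ)/(τ_Rβ) - 4ατ_R/(α²+4β²)·ρ²)·ρ' + (δ/β - α²(αε-2βγ)²/(16τ_R²β⁴))·ρ + (2αγ+4βε)/(α²+4β²)·ρ³ + (2λ/α - 4τ_R²β²/(α²+4β²)²)·ρ⁵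 = 0. -/
theorem stmt_10 (α β τ b c a lam eps gam del : ℝ)
    (hα : α ≠ 0) (hβ : β ≠ 0) (hτ : τ ≠ 0) (hb : b ≠ 0)
    (hc : c = -(4 * τ * α) / (5 * (α ^ 2 + 4 * β ^ 2)))
    (ha : a = 0)
    (hlam : lam = 2 * τ ^ 2 * α * (8 * α ^ 2 + 25 * β ^ 2) / (25 * (α ^ 2 + 4 * β ^ 2) ^ 2))
    (heps : eps = -(32 * b ^ 2 * τ ^ 2 * α ^ 2 * β) / (25 * (α ^ 2 + 4 * β ^ 2) ^ 2))
    (hgam : gam = -(16 * b ^ 2 * τ ^ 2 * α ^ 3) / (25 * (α ^ 2 + 4 * β ^ 2) ^ 2))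
    (hdel : del = 0)
    (ρ : ℝ → ℝ) (h1 : Differentiable ℝ ρ) (h2 : Differentiable ℝ (deriv ρ))
    (hode : ∀ ξ, deriv ρ ξ = c * (ρ ξ) ^ 2 * (b - ρ ξ)) :
    ∀ ξ, deriv (deriv ρ) ξ
      + ((α * eps - 2 * β * gam) / (τ * β) - 4 * α * τ / (α ^ 2 + 4 * β ^ 2) * (ρ ξ) ^ 2) * deriv ρ ξ
      + (del / β - α ^ 2 * (α * eps - 2 * β * gam) ^ 2 / (16 * τ ^ 2 * β ^ 4)) * ρ ξ
      + (2 * α * gam + 4 * β * eps) / (α ^ 2 + 4 * β ^ 2) * (ρ ξ) ^ 3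
      + (2 * lam / α - 4 * τ ^ 2 * β ^ 2 / (α ^ 2 + 4 * β ^ 2) ^ 2) * (ρ ξ) ^ 5 = 0 := by
  intro ξ
  have hd : deriv ρ = fun x => c * (ρ x) ^ 2 * (b - ρ x) := funext hode
  have h := (h1 ξ).hasDerivAt
  have H : HasDerivAt (fun x => c * (ρ x) ^ 2 * (b - ρ x))
      ((c * (2 * ρ ξ ^ 1 * deriv ρ ξ)) * (b - ρ ξ) + (c * ρ ξ ^ 2) * (0 - deriv ρ ξ)) ξ :=
    ((h.pow 2).const_mul c).mul ((hasDerivAt_const ξ b).sub h)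
  have hder : deriv (deriv ρ) ξ
      = (c * (2 * ρ ξ ^ 1 * deriv ρ ξ)) * (b - ρ ξ) + (c * ρ ξ ^ 2) * (0 - deriv ρ ξ) := by
    conv_lhs => rw [hd]
    exact H.deriv
  have hD : α ^ 2 + 4 * β ^ 2 ≠ 0 := by positivity
  rw [hder, hode ξ, hc, hlam, heps, hgam, hdel]
  field_simp
  ring
end

section
/- Let a ≠ b be reals, c ≠ 0, ξ₀ ∈ ℝ, and let w : ℝ → ℝ be the positive solution of w(ξ)·exp(w(ξ)) = exp(-c(a-b)²ξ - ξ₀). If c > 0 then ρ(ξ) = a + (b-a)/(1 + w(ξ)) is strictly monotone: strictly increasing if b > a and strictly decreasing if b < a. -/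
theorem stmt_13 (a b c ξ₀ : ℝ) (hab : a ≠ b) (hc0 : c ≠ 0)
    (w : ℝ → ℝ) (hpos : ∀ ξ, 0 < w ξ)
    (himp : ∀ ξ, w ξ * Real.exp (w ξ) = Real.exp (-c * (a - b) ^ 2 * ξ - ξ₀))
    (ρ : ℝ → ℝ) (hρ : ∀ ξ, ρ ξ = a + (b - a) / (1 + w ξ))
    (hc : 0 < c) :
    (a < b → StrictMono ρ) ∧ (b < a → StrictAnti ρ) := by
  have hab' : a - b ≠ 0 := sub_ne_zero.2 hab
  have hab2 : (0:ℝ) < (a - b) ^ 2 := by positivity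
  -- w is strictly antitone
  have hwanti : ∀ ⦃x y : ℝ⦄, x < y → w y < w x := by
    intro x y hxy
    by_contra h
    push_neg at h
    have hfle : w x * Real.exp (w x) ≤ w y * Real.exp (w y) :=
      mul_le_mul h (Real.exp_le_exp.2 h) (Real.exp_pos _).le (hpos y).le
    rw [himp x, himp y] at hfle
    have : -c * (a - b) ^ 2 * y < -c * (a - b) ^ 2 * x := by
      have : c * (a - b) ^ 2 > 0 := by positivity
      nlinarith
    have := Real.exp_lt_exp.2 (by linarith : -c * (a - b) ^ 2 * y - ξ₀ < -c * (a - b) ^ 2 * x - ξ₀)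
    linarith
  have hden : ∀ ξ, (0:ℝ) < 1 + w ξ := fun ξ => by have := hpos ξ; linarith
  have hinv : ∀ ⦃x y : ℝ⦄, x < y → 1 / (1 + w x) < 1 / (1 + w y) := by
    intro x y hxy
    exact one_div_lt_one_div_of_lt (hden y) (by linarith [hwanti hxy])
  constructor
  · intro hab3
    intro x y hxy
    rw [hρ x, hρ y]
    have h := hinv hxy
    have hba : 0 < b - a := by linarith
    have : (b - a) / (1 + w x) < (b - a) / (1 + w y) := by
      rw [div_lt_div_iff₀ (hden x) (hden y)]
      nlinarith [hwanti hxy]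
    linarith
  · intro hab3
    intro x y hxy
    rw [hρ x, hρ y]
    have h := hinv hxy
    have hba : b - a < 0 := by linarith
    have : (b - a) / (1 + w y) < (b - a) / (1 + w x) := by
      rw [div_lt_div_iff₀ (hden y) (hden x)]
      nlinarith [hwanti hxy]
    linarith
end

section
/- Let α, β, τ_R, γ, δ, ε, λ be reals with α, β, τ_R ≠ 0, and set v = (α²+4β²)(αε-2βγ)/(4τ_Rβ²), k = αδ/(2β) - α(α²+4β²)(αε-2βγ)²/(16τ_R²β⁴), μ = 2βλ/α. Suppose ρ, φ : ℝ → ℝ are twice differentiable, ρ satisfies the second-order equation ρ'' + ((αε-2βγ)/(τ_Rβ) - 4ατ_R/(α²+4β²)·ρ²)ρ' + (δ/β - α²(αε-2βγ)²/(16τ_R²β⁴))ρ + (2αγ+4βε)/(α²+4β²)·ρ³ + (2λ/α - 4τ_R²β²/(α²+4β²)²)·ρ⁵ = 0, and φ' = 2τ_Rβ/(α²+4β²)·ρ² + α(αε-2βγ)/(4τ_Rβ²). If ρ(ξ) ≠ 0 for all ξ, then the pair (ρ, φ) satisfies both reduced equations: (i) ρ'' - 4ρ'(ατ_Rρ² -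 βv)/(α²+4β²) + ρφ'(2αv - (α²+4β²)φ')/(α²+4β²) + 2(2βδ+αk)ρ/(α²+4β²) + 2(αγ+2βε)ρ³/(α²+4β²) + 2(αλ+2βμ)ρ⁵/(α²+4β²) = 0, and (ii) φ'' + 4βvφ'/(α²+4β²) - ρ'·(8βτ_Rρ/(α²+4β²) + (2αv - 2(α²+4β²)φ')/((α²+4β²)ρ)) - (2αδ-4βk)/(α²+4β²) - (2αε-4βγ)ρ²/(α²+4β²) - (2αμ-4βλ)ρ⁴/(α²+4β²) = 0. -/
set_option maxHeartbeats 2000000 in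
theorem stmt_16 (α β τ gam del eps lam v k μ : ℝ)
    (hα : α ≠ 0) (hβ : β ≠ 0) (hτ : τ ≠ 0)
    (hv : v = (α ^ 2 + 4 * β ^ 2) * (α * eps - 2 * β * gam) / (4 * τ * β ^ 2))
    (hk : k = α * del / (2 * β)
      - α * (α ^ 2 + 4 * β ^ 2) * (α * eps - 2 * β * gam) ^ 2 / (16 * τ ^ 2 * β ^ 4))
    (hμ : μ = 2 * β * lam / α)
    (ρ φ : ℝ → ℝ)
    (hρ1 : Differentiable ℝ ρ) (hρ2 : Differentiable ℝ (deriv ρ))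
    (hφ1 : Differentiable ℝ φ) (hφ2 : Differentiable ℝ (deriv φ))
    (hEq : ∀ ξ, deriv (deriv ρ) ξ
      + ((α * eps - 2 * β * gam) / (τ * β) - 4 * α * τ / (α ^ 2 + 4 * β ^ 2) * (ρ ξ) ^ 2) * deriv ρ ξ
      + (del / β - α ^ 2 * (α * eps - 2 * β * gam) ^ 2 / (16 * τ ^ 2 * β ^ 4)) * ρ ξ
      + (2 * α * gam + 4 * β * eps) / (α ^ 2 + 4 * β ^ 2) * (ρ ξ) ^ 3
      + (2 * lam / α - 4 * τ ^ 2 * β ^ 2 / (α ^ 2 + 4 * β ^ 2) ^ 2) * (ρ ξ) ^ 5 = 0)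
    (hcon : ∀ ξ, deriv φ ξ = 2 * τ * β / (α ^ 2 + 4 * β ^ 2) * (ρ ξ) ^ 2
      + α * (α * eps - 2 * β * gam) / (4 * τ * β ^ 2))
    (hne : ∀ ξ, ρ ξ ≠ 0) :
    (∀ ξ, deriv (deriv ρ) ξ
      - 4 * deriv ρ ξ * ((α * τ * (ρ ξ) ^ 2 - β * v) / (α ^ 2 + 4 * β ^ 2))
      + ρ ξ * deriv φ ξ * (2 * α * v - (α ^ 2 + 4 * β ^ 2) * deriv φ ξ) / (α ^ 2 + 4 * β ^ 2)
      + 2 * (2 * β * del + α * k) * ρ ξ / (α ^ 2 + 4 * β ^ 2)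
      + 2 * (α * gam + 2 * β * eps) * (ρ ξ) ^ 3 / (α ^ 2 + 4 * β ^ 2)
      + 2 * (α * lam + 2 * β * μ) * (ρ ξ) ^ 5 / (α ^ 2 + 4 * β ^ 2) = 0) ∧
    (∀ ξ, deriv (deriv φ) ξ
      + 4 * β * v * deriv φ ξ / (α ^ 2 + 4 * β ^ 2)
      - deriv ρ ξ * (8 * β * τ * ρ ξ / (α ^ 2 + 4 * β ^ 2)
        + (2 * α * v - 2 * (α ^ 2 + 4 * β ^ 2) * deriv φ ξ) / ((α ^ 2 + 4 * β ^ 2) * ρ ξ))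
      - (2 * α * del - 4 * β * k) / (α ^ 2 + 4 * β ^ 2)
      - (2 * α * eps - 4 * β * gam) * (ρ ξ) ^ 2 / (α ^ 2 + 4 * β ^ 2)
      - (2 * α * μ - 4 * β * lam) * (ρ ξ) ^ 4 / (α ^ 2 + 4 * β ^ 2) = 0) := by
  have hA : (α ^ 2 + 4 * β ^ 2) ≠ 0 := by positivity
  have hφeq : deriv φ = fun ξ => 2 * τ * β / (α ^ 2 + 4 * β ^ 2) * (ρ ξ) ^ 2
      + α * (α * eps - 2 * β * gam) / (4 * τ * β ^ 2) := funext hcon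
  have hφ'' : ∀ ξ, deriv (deriv φ) ξ
      = 2 * τ * β / (α ^ 2 + 4 * β ^ 2) * (2 * ρ ξ * deriv ρ ξ) := by
    intro ξ
    rw [hφeq]
    have h : HasDerivAt (fun x => 2 * τ * β / (α ^ 2 + 4 * β ^ 2) * (ρ x) ^ 2
        + α * (α * eps - 2 * β * gam) / (4 * τ * β ^ 2))
        (2 * τ * β / (α ^ 2 + 4 * β ^ 2) * (2 * ρ ξ ^ 1 * deriv ρ ξ)) ξ := by
      exact ((((hρ1 ξ).hasDerivAt).pow 2).const_mul _).add_const _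
    simpa using h.deriv
  constructor
  · intro ξ
    have E := hEq ξ
    have hd : deriv (deriv ρ) ξ =
      -(((α * eps - 2 * β * gam) / (τ * β) - 4 * α * τ / (α ^ 2 + 4 * β ^ 2) * (ρ ξ) ^ 2) * deriv ρ ξ
      + (del / β - α ^ 2 * (α * eps - 2 * β * gam) ^ 2 / (16 * τ ^ 2 * β ^ 4)) * ρ ξ
      + (2 * α * gam + 4 * β * eps) / (α ^ 2 + 4 * β ^ 2) * (ρ ξ) ^ 3
      + (2 * lam / α - 4 * τ ^ 2 * β ^ 2 / (α ^ 2 + 4 * β ^ 2) ^ 2) * (ρ ξ) ^ 5) := by linarith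
    rw [hd, hcon, hv, hk, hμ]
    field_simp
    ring
  · intro ξ
    have hne' := hne ξ
    rw [hφ'', hcon, hv, hk, hμ]
    field_simp
    ring
end

section
/- Let c ≠ 0, ξ₀, a, b be reals with a ≠ b, and let w : ℝ → ℝ be differentiable, positive, and satisfy w(ξ)·exp(w(ξ)) = exp(-c(a-b)²ξ - ξ₀) for all ξ. Then ρ(ξ) = a + (b-a)/(1 + w(ξ)) is twice differentiable and satisfies ρ'(ξ) = c·(a - ρ(ξ))²·(b - ρ(ξ)) for all ξ. -/
theorem stmt_17 (a b c ξ₀ : ℝ) (hab : a ≠ b) (hc : c ≠ 0)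
    (w : ℝ → ℝ) (hw : Differentiable ℝ w) (hpos : ∀ ξ, 0 < w ξ)
    (himp : ∀ ξ, w ξ * Real.exp (w ξ) = Real.exp (-c * (a - b) ^ 2 * ξ - ξ₀))
    (ρ : ℝ → ℝ) (hρ : ∀ ξ, ρ ξ = a + (b - a) / (1 + w ξ)) :
    (Differentiable ℝ ρ ∧ Differentiable ℝ (deriv ρ)) ∧
      ∀ ξ, deriv ρ ξ = c * (a - ρ ξ) ^ 2 * (b - ρ ξ) := by
  have h1 : ∀ ξ, (1 : ℝ) + w ξ ≠ 0 := fun ξ => ne_of_gt (by linarith [hpos ξ])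
  have hw' : ∀ ξ, HasDerivAt w (-c * (a - b) ^ 2 * w ξ / (1 + w ξ)) ξ := by
    intro ξ
    have hd : HasDerivAt w (deriv w ξ) ξ := (hw ξ).hasDerivAt
    have hF : HasDerivAt (fun x => w x * Real.exp (w x))
        (deriv w ξ * Real.exp (w ξ) + w ξ * (Real.exp (w ξ) * deriv w ξ)) ξ := hd.mul hd.exp
    have heq : (fun x => w x * Real.exp (w x))
        = fun x => Real.exp (-c * (a - b) ^ 2 * x - ξ₀) := funext himp
    rw [heq] at hF
    have hG : HasDerivAt (fun x => Real.exp (-c * (a - b) ^ 2 * x - ξ₀))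
        (Real.exp (-c * (a - b) ^ 2 * ξ - ξ₀) * (-c * (a - b) ^ 2)) ξ := by
      have h0 : HasDerivAt (fun x : ℝ => -c * (a - b) ^ 2 * x - ξ₀) (-c * (a - b) ^ 2 * 1) ξ :=
        ((hasDerivAt_id ξ).const_mul _).sub_const ξ₀
      rw [mul_one] at h0
      exact h0.exp
    have hu := hF.unique hG
    rw [← himp ξ] at hu
    have hE := (Real.exp_pos (w ξ)).ne'
    have h1ξ := h1 ξ
    have hdw : deriv w ξ = -c * (a - b) ^ 2 * w ξ / (1 + w ξ) := by
      field_simp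
      nlinarith [hu, Real.exp_pos (w ξ)]
    exact hdw ▸ hd
  have hρ' : ∀ ξ, HasDerivAt ρ (c * (a - b) ^ 2 * (b - a) * w ξ / (1 + w ξ) ^ 3) ξ := by
    intro ξ
    have h2 : HasDerivAt (fun x => (1 : ℝ) + w x) (-c * (a - b) ^ 2 * w ξ / (1 + w ξ)) ξ :=
      (hw' ξ).const_add 1
    have h3 : HasDerivAt (fun x => a + (b - a) / (1 + w x))
        ((0 * (1 + w ξ) - (b - a) * (-c * (a - b) ^ 2 * w ξ / (1 + w ξ))) / (1 + w ξ) ^ 2) ξ :=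
      ((hasDerivAt_const ξ (b - a)).div h2 (h1 ξ)).const_add a
    have hfun : ρ = fun x => a + (b - a) / (1 + w x) := funext hρ
    rw [hfun]
    convert h3 using 1
    field_simp
    ring
  have hdiff : Differentiable ℝ ρ := fun ξ => (hρ' ξ).differentiableAt
  have hderiv : deriv ρ = fun ξ => c * (a - b) ^ 2 * (b - a) * w ξ / (1 + w ξ) ^ 3 :=
    funext fun ξ => (hρ' ξ).deriv
  refine ⟨⟨hdiff, ?_⟩, ?_⟩
  · rw [hderiv]
    exact ((differentiable_const _).mul hw).div ((differentiable_const (1:ℝ)).add hw |>.pow 3)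
      (fun ξ => pow_ne_zero 3 (h1 ξ))
  · intro ξ
    rw [hderiv, hρ ξ]
    have h1ξ := h1 ξ
    field_simp
    ring
end
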